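/- For every pair of integers n, j with 1 ≤ j ≤ n, (e^{−1/12}/√(2πj))·(n^{1−j/n}·θ(j/n))^n ≤ j^n/j! ≤ (1/√(2πj))·(n^{1−j/n}·θ(j/n))^n. -/
import Mathlib

noncomputable def theta (x : ℝ) : ℝ := x ^ (1 - x) * Real.exp x

open Real Stirling

lemma stirling_antitone {a b : ℕ} (ha : 1 ≤ a) (hab : a ≤ b) :
    stirlingSeq b ≤ stirlingSeq a := by
  obtain ⟨a', rfl⟩ := Nat.exists_eq_add_of_le ha
  obtain ⟨b', rfl⟩ := Nat.exists_eq_add_of_le hab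
  have h := log_stirlingSeq'_antitone (le_add_right le_rfl : a' ≤ a' + b')
  simp only [Function.comp, Nat.succ_eq_add_one] at h
  have h1 : 0 < stirlingSeq (a' + 1) := stirlingSeq'_pos a'
  have h2 : 0 < stirlingSeq (a' + b' + 1) := stirlingSeq'_pos (a' + b')
  have := Real.exp_le_exp.mpr h
  rw [Real.exp_log h2, Real.exp_log h1] at this
  convert this using 2 <;> omega

lemma sqrt_pi_le_stirling {j : ℕ} (hj : 1 ≤ j) : Real.sqrt π ≤ stirlingSeq j := by
  have htend : Filter.Tendsto (fun k => stirlingSeq (k + j)) Filter.atTop (nhds (Real.sqrt π)) :=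
    tendsto_stirlingSeq_sqrt_pi.comp (Filter.tendsto_add_atTop_nat j)
  have hanti : Antitone (fun k => stirlingSeq (k + j)) := fun m n hmn =>
    stirling_antitone (by omega) (by omega)
  simpa using hanti.le_of_tendsto htend 0

lemma numeric : Real.exp 1 / Real.sqrt 2 ≤ Real.sqrt π * Real.exp (1 / 12) := by
  have h1 : Real.exp 1 < 2.7182818286 := Real.exp_one_lt_d9
  have h2 : (3.141592 : ℝ) < π := Real.pi_gt_d6
  have h3 : ((25 / 24 : ℝ)) ^ 4 ≤ Real.exp (1 / 6) := by
    have h := Real.add_one_le_exp (1 / 24 : ℝ)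
    calc ((25 / 24 : ℝ)) ^ 4 ≤ (Real.exp (1 / 24)) ^ 4 := by
          apply pow_le_pow_left₀ (by norm_num) (by linarith)
      _ = Real.exp ((4 : ℕ) * (1 / 24)) := (Real.exp_nat_mul _ 4).symm
      _ = Real.exp (1 / 6) := by norm_num
  have he : Real.exp (1 / 12) ^ 2 = Real.exp (1 / 6) := by
    rw [sq, ← Real.exp_add]; norm_num
  have hsq : (Real.exp 1 / Real.sqrt 2) ^ 2 ≤ (Real.sqrt π * Real.exp (1 / 12)) ^ 2 := by
    rw [div_pow, mul_pow, Real.sq_sqrt (by norm_num : (0:ℝ) ≤ 2), Real.sq_sqrt Real.pi_pos.le, he]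
    nlinarith [Real.exp_pos 1]
  have hpos1 : (0:ℝ) ≤ Real.exp 1 / Real.sqrt 2 := by positivity
  have hpos2 : (0:ℝ) ≤ Real.sqrt π * Real.exp (1 / 12) := by positivity
  have := Real.sqrt_le_sqrt hsq
  rwa [Real.sqrt_sq hpos1, Real.sqrt_sq hpos2] at this

lemma factorial_bounds {j : ℕ} (hj : 1 ≤ j) :
    Real.sqrt (2 * π * j) * ((j : ℝ) ^ j / Real.exp j) ≤ (Nat.factorial j : ℝ) ∧
    (Nat.factorial j : ℝ) ≤ Real.exp (1 / 12) * (Real.sqrt (2 * π * j) * ((j : ℝ) ^ j / Real.exp j)) := by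
  have hj0 : (0:ℝ) < j := by exact_mod_cast hj
  have hden : (0:ℝ) < Real.sqrt (2 * j) * ((j : ℝ) / Real.exp 1) ^ j := by positivity
  have hdef : stirlingSeq j = (Nat.factorial j : ℝ) / (Real.sqrt (2 * j) * ((j : ℝ) / Real.exp 1) ^ j) := rfl
  have hsplit : Real.sqrt (2 * π * j) = Real.sqrt π * Real.sqrt (2 * j) := by
    rw [← Real.sqrt_mul Real.pi_pos.le, show π * (2 * (j:ℝ)) = 2 * π * j by ring]
  have hpow : ((j : ℝ) / Real.exp 1) ^ j = (j : ℝ) ^ j / Real.exp j := by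
    rw [div_pow, ← Real.exp_nat_mul, mul_one]
  constructor
  · have h := sqrt_pi_le_stirling hj
    rw [hdef, le_div_iff₀ hden] at h
    calc Real.sqrt (2 * π * j) * ((j : ℝ) ^ j / Real.exp j)
        = Real.sqrt π * (Real.sqrt (2 * j) * ((j : ℝ) / Real.exp 1) ^ j) := by
          rw [hsplit, hpow]; ring
      _ ≤ _ := h
  · have h := stirling_antitone le_rfl hj
    rw [hdef, stirlingSeq_one, div_le_iff₀ hden] at h
    calc (Nat.factorial j : ℝ)
        ≤ Real.exp 1 / Real.sqrt 2 * (Real.sqrt (2 * j) * ((j : ℝ) / Real.exp 1) ^ j) := h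
      _ ≤ Real.sqrt π * Real.exp (1 / 12) * (Real.sqrt (2 * j) * ((j : ℝ) / Real.exp 1) ^ j) := by
          apply mul_le_mul_of_nonneg_right numeric hden.le
      _ = Real.exp (1 / 12) * (Real.sqrt (2 * π * j) * ((j : ℝ) ^ j / Real.exp j)) := by
          rw [hsplit, hpow]; ring

theorem stmt_7 (n j : ℕ) (hj1 : 1 ≤ j) (hj2 : j ≤ n) :
    (Real.exp (-(1 / 12)) / Real.sqrt (2 * Real.pi * j)) *
        ((n : ℝ) ^ (1 - (j : ℝ) / n) * theta ((j : ℝ) / n)) ^ n ≤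
      (j : ℝ) ^ n / (Nat.factorial j : ℝ) ∧
    (j : ℝ) ^ n / (Nat.factorial j : ℝ) ≤
      (1 / Real.sqrt (2 * Real.pi * j)) *
        ((n : ℝ) ^ (1 - (j : ℝ) / n) * theta ((j : ℝ) / n)) ^ n := by
  have hn1 : 1 ≤ n := le_trans hj1 hj2
  have hn0 : (0:ℝ) < n := by exact_mod_cast hn1
  have hj0 : (0:ℝ) < j := by exact_mod_cast hj1
  have hnj : (n:ℝ) * ((j:ℝ) / n) = j := by field_simp
  have key : ((n : ℝ) ^ (1 - (j : ℝ) / n) * theta ((j : ℝ) / n)) ^ n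
      = (j : ℝ) ^ (n - j) * Real.exp j := by
    have h1 : (n:ℝ) ^ (1 - (j:ℝ)/n) * ((j:ℝ)/n) ^ (1 - (j:ℝ)/n) = (j:ℝ) ^ (1 - (j:ℝ)/n) := by
      rw [← Real.mul_rpow hn0.le (by positivity), hnj]
    calc ((n : ℝ) ^ (1 - (j : ℝ) / n) * theta ((j : ℝ) / n)) ^ n
        = ((j:ℝ) ^ (1 - (j:ℝ)/n) * Real.exp ((j:ℝ)/n)) ^ n := by
          rw [theta, ← mul_assoc, h1]
      _ = ((j:ℝ) ^ (1 - (j:ℝ)/n)) ^ (n:ℕ) * Real.exp ((n:ℕ) * ((j:ℝ)/n)) := by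
          rw [mul_pow, Real.exp_nat_mul]
      _ = (j:ℝ) ^ ((1 - (j:ℝ)/n) * n) * Real.exp j := by
          rw [← Real.rpow_natCast ((j:ℝ) ^ (1 - (j:ℝ)/n)) n, ← Real.rpow_mul hj0.le, hnj]
      _ = (j:ℝ) ^ (n - j) * Real.exp j := by
          congr 1
          rw [show (1 - (j:ℝ)/n) * n = (n:ℝ) - j by field_simp,
            show ((n:ℝ) - j) = ((n - j : ℕ) : ℝ) by push_cast [Nat.cast_sub hj2]; ring,
            Real.rpow_natCast]
  have hjn : (j:ℝ) ^ n = (j:ℝ) ^ (n - j) * (j:ℝ) ^ j := by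
    rw [← pow_add, Nat.sub_add_cancel hj2]
  obtain ⟨hL, hU⟩ := factorial_bounds hj1
  have hS : (0:ℝ) < Real.sqrt (2 * π * j) := by positivity
  have hF : (0:ℝ) < (Nat.factorial j : ℝ) := by exact_mod_cast Nat.factorial_pos j
  have hpow : (0:ℝ) < (j:ℝ) ^ (n - j) := by positivity
  rw [key, hjn]
  constructor
  · rw [div_mul_eq_mul_div, div_le_div_iff₀ hS hF, Real.exp_neg]
    have h2 : (j:ℝ) ^ (n - j) * ((Real.exp (1/12))⁻¹ * Real.exp j * (Nat.factorial j : ℝ))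
        ≤ (j:ℝ) ^ (n - j) * (Real.sqrt (2 * π * j) * (j:ℝ) ^ j) := by
      apply mul_le_mul_of_nonneg_left _ hpow.le
      calc (Real.exp (1/12))⁻¹ * Real.exp j * (Nat.factorial j : ℝ)
          ≤ (Real.exp (1/12))⁻¹ * Real.exp j *
            (Real.exp (1 / 12) * (Real.sqrt (2 * π * j) * ((j : ℝ) ^ j / Real.exp j))) := by
            apply mul_le_mul_of_nonneg_left hU (by positivity)
        _ = Real.sqrt (2 * π * j) * (j:ℝ) ^ j := by
            field_simp
    calc (Real.exp (1/12:ℝ))⁻¹ * ((j:ℝ) ^ (n - j) * Real.exp j) * (Nat.factorial j : ℝ)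
        = (j:ℝ) ^ (n - j) * ((Real.exp (1/12))⁻¹ * Real.exp j * (Nat.factorial j : ℝ)) := by
          ring
      _ ≤ (j:ℝ) ^ (n - j) * (Real.sqrt (2 * π * j) * (j:ℝ) ^ j) := h2
      _ = (j:ℝ) ^ (n - j) * (j:ℝ) ^ j * Real.sqrt (2 * π * j) := by ring
  · rw [one_div, div_le_iff₀ hF, inv_mul_eq_div, div_mul_eq_mul_div, le_div_iff₀ hS]
    calc (j:ℝ) ^ (n - j) * (j:ℝ) ^ j * Real.sqrt (2 * π * j)
        = (j:ℝ) ^ (n - j) * (Real.sqrt (2 * π * j) * ((j : ℝ) ^ j / Real.exp j) * Real.exp j) := by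
          field_simp
      _ ≤ (j:ℝ) ^ (n - j) * ((Nat.factorial j : ℝ) * Real.exp j) := by
          apply mul_le_mul_of_nonneg_left _ hpow.le
          exact mul_le_mul_of_nonneg_right hL (Real.exp_pos _).le
      _ = (j:ℝ) ^ (n - j) * Real.exp j * (Nat.factorial j : ℝ) := by ring
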